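/- For all non-negative integers m and n, the q-factorial ratio C_q(m,n) = [6m+30n]!·[n]! / ([3m+15n]!·[2m+10n]!·[m]!·[6n]!) is a polynomial in q with integer coefficients. -/
import Mathlib

open Polynomial Finset

set_option maxHeartbeats 4000000 in
lemma qC_key (d a b : ℕ) (ha : a < d) (hb : b < d) :
    (3*a+15*b)/d + (2*a+10*b)/d + (6*b)/d ≤ (6*a+30*b)/d := by
  have hd : 0 < d := by omega
  have e1 := Nat.div_add_mod (3*a+15*b) d
  have e2 := Nat.div_add_mod (2*a+10*b) d
  have e3 := Nat.div_add_mod (6*b) d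
  have m1 := Nat.mod_lt (3*a+15*b) hd
  have m2 := Nat.mod_lt (2*a+10*b) hd
  have m3 := Nat.mod_lt (6*b) hd
  set k1 := (3*a+15*b)/d with hk1
  set k2 := (2*a+10*b)/d with hk2
  set k3 := (6*b)/d with hk3
  have b1 : k1 < 18 := by rw [hk1, Nat.div_lt_iff_lt_mul hd]; omega
  have b2 : k2 < 12 := by rw [hk2, Nat.div_lt_iff_lt_mul hd]; omega
  have b3 : k3 < 6 := by rw [hk3, Nat.div_lt_iff_lt_mul hd]; omega
  rw [Nat.le_div_iff_mul_le hd]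
  clear_value k1 k2 k3
  clear hk1 hk2 hk3
  interval_cases k1 <;> interval_cases k2 <;> interval_cases k3 <;> omega

lemma qC_key2 (d m n : ℕ) :
    (3*m+15*n)/d + (2*m+10*n)/d + m/d + (6*n)/d ≤ (6*m+30*n)/d + n/d := by
  rcases Nat.eq_zero_or_pos d with rfl | hd
  · simp
  · obtain ⟨q, a, hm, haa⟩ : ∃ q a, m = d*q + a ∧ a < d :=
      ⟨m/d, m%d, (Nat.div_add_mod m d).symm, Nat.mod_lt m hd⟩
    obtain ⟨p, b, hn, hbb⟩ : ∃ p b, n = d*p + b ∧ b < d :=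
      ⟨n/d, n%d, (Nat.div_add_mod n d).symm, Nat.mod_lt n hd⟩
    have k := qC_key d a b haa hbb
    have r1 : (3*m+15*n)/d = 3*q+15*p + (3*a+15*b)/d := by
      rw [hm, hn, show 3*(d*q+a)+15*(d*p+b) = d*(3*q+15*p)+(3*a+15*b) by ring,
        Nat.mul_add_div hd]
    have r2 : (2*m+10*n)/d = 2*q+10*p + (2*a+10*b)/d := by
      rw [hm, hn, show 2*(d*q+a)+10*(d*p+b) = d*(2*q+10*p)+(2*a+10*b) by ring,
        Nat.mul_add_div hd]
    have r3 : m/d = q := by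
      rw [hm, Nat.mul_add_div hd, Nat.div_eq_of_lt haa]; omega
    have r4 : (6*n)/d = 6*p + (6*b)/d := by
      rw [hn, show 6*(d*p+b) = d*(6*p)+6*b by ring, Nat.mul_add_div hd]
    have r5 : (6*m+30*n)/d = 6*q+30*p + (6*a+30*b)/d := by
      rw [hm, hn, show 6*(d*q+a)+30*(d*p+b) = d*(6*q+30*p)+(6*a+30*b) by ring,
        Nat.mul_add_div hd]
    have r6 : n/d = p := by
      rw [hn, Nat.mul_add_div hd, Nat.div_eq_of_lt hbb]; omega
    omega

noncomputable def qfact (k : ℕ) : Polynomial ℤ :=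
  ∏ i ∈ Finset.range k, ∑ j ∈ Finset.range (i + 1), Polynomial.X ^ j

lemma qfact_eq (N : ℕ) : ∀ k, k ≤ N →
    qfact k = ∏ d ∈ Finset.Icc 2 N, (cyclotomic d ℤ) ^ (k / d) := by
  intro k
  induction k with
  | zero => intro _; simp [qfact]
  | succ k ih =>
    intro hk
    rw [qfact, Finset.prod_range_succ, ← qfact, ih (by omega),
      ← Polynomial.prod_cyclotomic_eq_geom_sum (Nat.succ_pos k) ℤ]
    have hdiv : (k+1).divisors.erase 1 = (Finset.Icc 2 N).filter (· ∣ (k+1)) := by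
      ext x
      simp only [Finset.mem_erase, Nat.mem_divisors, Finset.mem_filter, Finset.mem_Icc]
      constructor
      · rintro ⟨h1, hx, -⟩
        have := Nat.pos_of_dvd_of_pos hx (Nat.succ_pos k)
        exact ⟨⟨by omega, le_trans (Nat.le_of_dvd (Nat.succ_pos k) hx) hk⟩, hx⟩
      · rintro ⟨⟨h2, -⟩, hx⟩; exact ⟨by omega, hx, Nat.succ_ne_zero k⟩
    have h2 : ∀ d ∈ Finset.Icc 2 N,
        (cyclotomic d ℤ) ^ ((k+1) / d)
          = (cyclotomic d ℤ) ^ (k / d) * (if d ∣ (k+1) then cyclotomic d ℤ else 1) := by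
      intro d _
      rw [Nat.succ_div, pow_add]
      congr 1
      split <;> simp
    rw [Finset.prod_congr rfl h2, Finset.prod_mul_distrib, ← Finset.prod_filter, ← hdiv]

theorem qC_polynomial (m n : ℕ) :
    ∃ P : Polynomial ℤ,
      qfact (3*m + 15*n) * qfact (2*m + 10*n) * qfact m * qfact (6*n) * P =
      qfact (6*m + 30*n) * qfact n := by
  refine ⟨∏ d ∈ Finset.Icc 2 (6*m+30*n), (cyclotomic d ℤ) ^
      (((6*m+30*n)/d + n/d) - ((3*m+15*n)/d + (2*m+10*n)/d + m/d + (6*n)/d)), ?_⟩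
  rw [qfact_eq (6*m+30*n) (3*m+15*n) (by omega), qfact_eq (6*m+30*n) (2*m+10*n) (by omega),
    qfact_eq (6*m+30*n) m (by omega), qfact_eq (6*m+30*n) (6*n) (by omega),
    qfact_eq (6*m+30*n) (6*m+30*n) (by omega), qfact_eq (6*m+30*n) n (by omega),
    ← Finset.prod_mul_distrib, ← Finset.prod_mul_distrib, ← Finset.prod_mul_distrib,
    ← Finset.prod_mul_distrib, ← Finset.prod_mul_distrib]
  refine Finset.prod_congr rfl fun d _ => ?_
  rw [← pow_add, ← pow_add, ← pow_add, ← pow_add, ← pow_add]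
  congr 1
  have := qC_key2 d m n
  omega
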